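/- Let sl₂(ℂ[X]) be the Lie algebra of 2×2 trace-zero matrices over the polynomial ring ℂ[X] with bracket [A,B] = AB − BA, and set y = E₁₂, z = E₂₁, h = E₁₁ − E₂₂. Then the Lie subalgebra of sl₂(ℂ[X]) generated by the three elements z, h, and y + X·z equals the whole Lie algebra sl₂(ℂ[X]). -/

import Mathlib

/-!
With `w = y + c • z`, the relation `⁅h, w⁆ = 2 • y - 2 • c • z` gives `2 • w + ⁅h, w⁆ = 4 • y`, so
`y` and then `c • z = w - y` lie in the generated subalgebra. From `⁅cⁿ • y, c • z⁆ = cⁿ⁺¹ • h`,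
`⁅cⁿ⁺¹ • h, y⁆ = 2 • cⁿ⁺¹ • y` and `⁅z, cⁿ⁺¹ • h⁆ = 2 • cⁿ⁺¹ • z`, induction puts `cⁿ • y`, `cⁿ • z`
and `cⁿ • h` in it for every `n`, hence `p • y`, `p • z`, `p • h` for every polynomial `p` when
`c = X`. A trace-zero matrix `B` is `B₀₀ • h + B₀₁ • y + B₁₀ • z`.
-/

open Polynomial Matrix

attribute [local instance] LieRing.ofAssociativeRing

theorem Submodule.aeval_smul_mem_of_forall_pow_smul_mem {K A V : Type*} [CommRing K] [CommRing A]
    [Algebra K A] [AddCommGroup V] [Module K V] [Module A V] [IsScalarTower K A V]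
    (M : Submodule K V) {c : A} {v : V} (hv : ∀ n : ℕ, c ^ n • v ∈ M) (p : K[X]) :
    aeval c p • v ∈ M := by
  induction p using Polynomial.induction_on' with
  | add p q hp hq => rw [map_add, add_smul]; exact M.add_mem hp hq
  | monomial n a =>
    rw [aeval_monomial, mul_smul, algebraMap_smul]
    exact M.smul_mem a (hv n)

theorem Submodule.nsmul_mem_iff (K : Type*) {M : Type*} [DivisionRing K] [AddCommGroup M]
    [Module K M] (p : Submodule K M) {n : ℕ} (hn : (n : K) ≠ 0) {x : M} : n • x ∈ p ↔ x ∈ p := by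
  rw [← Nat.cast_smul_eq_nsmul K]
  exact p.smul_mem_iff hn

namespace Matrix

section Brackets

variable (R : Type*) [Ring R]

def sl2y : Matrix (Fin 2) (Fin 2) R := single 0 1 1

def sl2z : Matrix (Fin 2) (Fin 2) R := single 1 0 1

def sl2h : Matrix (Fin 2) (Fin 2) R := single 0 0 1 - single 1 1 1

variable {R}

theorem lie_sl2y_sl2z : ⁅sl2y R, sl2z R⁆ = sl2h R := by
  ext i j
  fin_cases i <;> fin_cases j <;> simp [sl2y, sl2z, sl2h, Ring.lie_def, mul_apply, single]

theorem lie_sl2h_sl2y : ⁅sl2h R, sl2y R⁆ = 2 • sl2y R := by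
  ext i j
  fin_cases i <;> fin_cases j <;> norm_num [sl2y, sl2h, Ring.lie_def, mul_apply, single]

theorem lie_sl2h_sl2z : ⁅sl2h R, sl2z R⁆ = -(2 • sl2z R) := by
  ext i j
  fin_cases i <;> fin_cases j <;> norm_num [sl2z, sl2h, Ring.lie_def, mul_apply, single]

theorem eq_sl2_decomposition_of_trace_eq_zero {A : Matrix (Fin 2) (Fin 2) R} (hA : trace A = 0) :
    A = A 0 0 • sl2h R + A 0 1 • sl2y R + A 1 0 • sl2z R := by
  rw [trace_fin_two, add_eq_zero_iff_eq_neg'] at hA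
  ext i j
  fin_cases i <;> fin_cases j <;> simp [sl2y, sl2z, sl2h, single, hA]

end Brackets

theorem lieSpan_le_ker_trace (K : Type*) {A n : Type*} [CommRing K] [CommRing A] [Algebra K A]
    [Fintype n] [DecidableEq n] {s : Set (Matrix n n A)} (hs : ∀ x ∈ s, trace x = 0) :
    (LieSubalgebra.lieSpan K (Matrix n n A) s).toSubmodule ≤
      LinearMap.ker (traceLinearMap n K A) := by
  intro x hx
  induction hx using LieSubalgebra.lieSpan_induction with
  | mem x hx => exact hs x hx
  | zero => exact Submodule.zero_mem _
  | add _ _ _ _ hx hy => exact Submodule.add_mem _ hx hy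
  | smul a _ _ hx => exact Submodule.smul_mem _ a hx
  | lie x y _ _ _ _ => exact LieAlgebra.matrix_trace_commutator_zero n A x y

section Generation

variable {K A : Type*} [Field K] [NeZero (2 : K)] [CommRing A] [Algebra K A]
  {S : LieSubalgebra K (Matrix (Fin 2) (Fin 2) A)} {c : A}

theorem two_nsmul_mem_iff {x : Matrix (Fin 2) (Fin 2) A} : 2 • x ∈ S ↔ x ∈ S :=
  S.toSubmodule.nsmul_mem_iff K (by simpa using two_ne_zero)

theorem sl2y_mem_of_mem (hh : sl2h A ∈ S) (hw : sl2y A + c • sl2z A ∈ S) : sl2y A ∈ S := by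
  have hlie : ⁅sl2h A, sl2y A + c • sl2z A⁆ = 2 • sl2y A - 2 • c • sl2z A := by
    rw [lie_add, lie_smul, lie_sl2h_sl2y, lie_sl2h_sl2z, smul_neg, smul_comm, ← sub_eq_add_neg]
  have h4 : 2 • 2 • sl2y A ∈ S := by
    convert S.add_mem (S.nsmul_mem hw 2) (S.lie_mem hh hw) using 1
    rw [hlie]
    abel
  exact two_nsmul_mem_iff.1 (two_nsmul_mem_iff.1 h4)

theorem pow_smul_sl2_mem (hz : sl2z A ∈ S) (hh : sl2h A ∈ S) (hw : sl2y A + c • sl2z A ∈ S)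
    (n : ℕ) : c ^ n • sl2y A ∈ S ∧ c ^ n • sl2z A ∈ S ∧ c ^ n • sl2h A ∈ S := by
  have hy := sl2y_mem_of_mem hh hw
  have hcz : c • sl2z A ∈ S := by simpa using S.sub_mem hw hy
  induction n with
  | zero => simpa using ⟨hy, hz, hh⟩
  | succ n ih =>
    have hh' : c ^ (n + 1) • sl2h A ∈ S := by
      have := S.lie_mem ih.1 hcz
      rwa [smul_lie, lie_smul, lie_sl2y_sl2z, smul_smul, ← pow_succ] at this
    refine ⟨two_nsmul_mem_iff.1 ?_, two_nsmul_mem_iff.1 ?_, hh'⟩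
    · have := S.lie_mem hh' hy
      rwa [smul_lie, lie_sl2h_sl2y, smul_comm] at this
    · have := S.lie_mem hz hh'
      rwa [lie_smul, ← lie_skew, lie_sl2h_sl2z, neg_neg, smul_comm] at this

end Generation

theorem ker_trace_le_of_mem {K : Type*} [Field K] [NeZero (2 : K)]
    {S : LieSubalgebra K (Matrix (Fin 2) (Fin 2) K[X])}
    (hz : sl2z K[X] ∈ S) (hh : sl2h K[X] ∈ S) (hw : sl2y K[X] + (X : K[X]) • sl2z K[X] ∈ S) :
    LinearMap.ker (traceLinearMap (Fin 2) K K[X]) ≤ S.toSubmodule := by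
  have hmem (p : K[X]) {v : Matrix (Fin 2) (Fin 2) K[X]} (hv : ∀ n : ℕ, (X : K[X]) ^ n • v ∈ S) :
      p • v ∈ S := by
    simpa using S.toSubmodule.aeval_smul_mem_of_forall_pow_smul_mem hv p
  intro B hB
  rw [eq_sl2_decomposition_of_trace_eq_zero hB]
  have hpow := pow_smul_sl2_mem hz hh hw
  exact S.add_mem (S.add_mem (hmem _ fun n => (hpow n).2.2) (hmem _ fun n => (hpow n).1))
    (hmem _ fun n => (hpow n).2.1)

end Matrix

theorem stmt15
    (y z h : Matrix (Fin 2) (Fin 2) ℂ[X])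
    (hy : y = Matrix.single 0 1 1)
    (hz : z = Matrix.single 1 0 1)
    (hh : h = Matrix.single 0 0 1 - Matrix.single 1 1 1) :
    (LieSubalgebra.lieSpan ℂ (Matrix (Fin 2) (Fin 2) ℂ[X])
        {z, h, y + (X : ℂ[X]) • z}).toSubmodule
      = LinearMap.ker (Matrix.traceLinearMap (Fin 2) ℂ ℂ[X]) := by
  subst hy hz hh
  apply le_antisymm
  · apply lieSpan_le_ker_trace
    simp [trace_fin_two]
  · exact ker_trace_le_of_mem (LieSubalgebra.subset_lieSpan (Set.mem_insert _ _))
      (LieSubalgebra.subset_lieSpan (Set.mem_insert_of_mem _ (Set.mem_insert _ _)))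
      (LieSubalgebra.subset_lieSpan (Set.mem_insert_of_mem _ (Set.mem_insert_of_mem _ rfl)))
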